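/- Let Γ' be obtained from a weighted forest Γ by blowing up a vertex P, creating new vertex R, and suppose d(Γ') = d(Γ) = d. Then, in Γ', the vertex determinant d_R := d(Γ'_R) equals d_P + d, and the edge determinant d_{PR} := d(Γ'_{PR}) (where Γ'_{PR} is Γ' with only the edge (P,R) removed) also equals d_P + d, where d_P = d(Γ_P). -/

import Mathlib

open Classical Finset

/-- The matrix `Q(Γ)` of a weighted graph: `-a i` on the diagonal, `-1` for
adjacent vertices, `0` otherwise. -/
noncomputable def wMatrix {V : Type*} [Fintype V] (G : SimpleGraph V) (a : V → ℤ) :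
    Matrix V V ℤ :=
  Matrix.of fun i j => if i = j then -a i else if G.Adj i j then (-1 : ℤ) else 0

/-- The determinant `d(Γ)` of a weighted graph. -/
noncomputable def wDet {V : Type*} [Fintype V] (G : SimpleGraph V) (a : V → ℤ) : ℤ :=
  (wMatrix G a).det

/-- The determinant of the weighted graph obtained by deleting a set `s` of
vertices (and all incident edges). -/
noncomputable def wDetDel {V : Type*} [Fintype V] (G : SimpleGraph V) (a : V → ℤ)
    (s : Set V) : ℤ :=
  wDet (SimpleGraph.comap (Subtype.val : {v // v ∉ s} → V) G) (fun v => a v.1)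

/-- The blow-up of a weighted graph at a vertex `P`. -/
def blowupVertexGraph {V : Type*} (G : SimpleGraph V) (P : V) :
    SimpleGraph (V ⊕ Unit) where
  Adj x y :=
    match x, y with
    | Sum.inl u, Sum.inl v => G.Adj u v
    | Sum.inl u, Sum.inr _ => u = P
    | Sum.inr _, Sum.inl v => v = P
    | Sum.inr _, Sum.inr _ => False
  symm := by
    constructor
    rintro (u | u) (v | v) h
    · exact G.adj_symm h
    · exact h
    · exact h
    · exact h.elim
  loopless := by
    constructor
    rintro (u | u) h
    · exact G.irrefl h
    · exact h.elim

/-- The weights after blowing up the vertex `P`. -/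
noncomputable def blowupVertexWeights {V : Type*} [DecidableEq V] (a : V → ℤ) (P : V) :
    V ⊕ Unit → ℤ :=
  Sum.elim (Function.update a P (a P - 1)) (fun _ => (-1 : ℤ))

/-!
Removing the new vertex `R` from `Γ'` leaves `Γ` with the weight of `P` lowered by one, i.e. the
`(P, P)` entry of `Q(Γ)` raised by one; by linearity of the determinant in row `P` this adds the
minor `d_P`, so `d_R = d + d_P`. Removing only the edge `PR` instead splits `Γ'` into that graph and
the isolated vertex `R`, whose `1 × 1` matrix is `(1)`, so `d_{PR} = d_R`.
-/

namespace Matrix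

variable {n R : Type*} [Fintype n] [DecidableEq n] [CommRing R]

theorem det_updateRow_single_self (A : Matrix n n R) (i : n) :
    (A.updateRow i (Pi.single i 1)).det =
      (A.submatrix (Subtype.val : {j // j ≠ i} → n) Subtype.val).det := by
  have hblocks : (A.updateRow i (Pi.single i 1)).submatrix (Equiv.sumCompl (· = i))
      (Equiv.sumCompl (· = i)) =
      fromBlocks 1 0 (of fun (j : {j // j ≠ i}) (_ : {j // j = i}) => A j i)
        (A.submatrix Subtype.val Subtype.val) := by
    ext (⟨j, rfl⟩ | ⟨j, hj⟩) (⟨k, rfl⟩ | ⟨k, hk⟩) <;> simp [updateRow_apply, *]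
  rw [← det_submatrix_equiv_self (Equiv.sumCompl (· = i)), hblocks, det_fromBlocks_zero₁₂,
    det_one, one_mul]

end Matrix

section

variable {V W : Type*} [Fintype V] [Fintype W]

theorem wMatrix_comap (G : SimpleGraph V) (a : V → ℤ) {f : W → V}
    (hf : Function.Injective f) :
    wMatrix (G.comap f) (a ∘ f) = (wMatrix G a).submatrix f f := by
  ext i j
  simp [wMatrix, hf.eq_iff]

theorem wDet_comap_equiv (G : SimpleGraph V) (a : V → ℤ) (e : W ≃ V) :
    wDet (G.comap e) (a ∘ e) = wDet G a := by
  rw [wDet, wMatrix_comap G a e.injective, Matrix.det_submatrix_equiv_self, wDet]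

/-- `wDet` is elaborated with the classical `DecidableEq` instance. -/
theorem wDet_eq_det [DecidableEq V] (G : SimpleGraph V) (a : V → ℤ) :
    wDet G a = (wMatrix G a).det := by
  unfold wDet
  convert! rfl

theorem wDetDel_singleton [DecidableEq V] (G : SimpleGraph V) (a : V → ℤ) (P : V) :
    wDetDel G a {P} = ((wMatrix G a).updateRow P (Pi.single P 1)).det := by
  rw [Matrix.det_updateRow_single_self, ← wMatrix_comap G a Subtype.val_injective]
  unfold wDetDel wDet
  -- `{v // v ∉ {P}}` and `{v // v ≠ P}` agree only up to unfolding, with different instances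
  convert! rfl using 2

theorem wMatrix_update_sub [DecidableEq V] (G : SimpleGraph V) (a : V → ℤ) (P : V) (c : ℤ) :
    wMatrix G (Function.update a P (a P - c)) =
      (wMatrix G a).updateRow P (wMatrix G a P + c • Pi.single P 1) := by
  ext i j
  rcases eq_or_ne i P with rfl | hi
  · rcases eq_or_ne i j with rfl | hij
    · simp [wMatrix]
      ring
    · simp [wMatrix, Matrix.updateRow_apply, hij, hij.symm]
  · simp [wMatrix, Matrix.updateRow_apply, hi]

theorem wDet_update_sub [DecidableEq V] (G : SimpleGraph V) (a : V → ℤ) (P : V) (c : ℤ) :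
    wDet G (Function.update a P (a P - c)) = wDet G a + c * wDetDel G a {P} := by
  rw [wDet_eq_det, wDet_eq_det, wMatrix_update_sub, Matrix.det_updateRow_add,
    Matrix.updateRow_eq_self, Matrix.det_updateRow_smul, wDetDel_singleton]

theorem wMatrix_sum_eq_fromBlocks (H : SimpleGraph (V ⊕ W)) (b : V ⊕ W → ℤ)
    (hH : ∀ v w, ¬H.Adj (Sum.inl v) (Sum.inr w)) :
    wMatrix H b = Matrix.fromBlocks (wMatrix (H.comap Sum.inl) (b ∘ Sum.inl)) 0 0
      (wMatrix (H.comap Sum.inr) (b ∘ Sum.inr)) := by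
  have hH' : ∀ w v, ¬H.Adj (Sum.inr w) (Sum.inl v) := fun w v h => hH v w h.symm
  ext (v | w) (v | w) <;> simp [wMatrix, hH, hH']

theorem wDet_sum_of_not_adj (H : SimpleGraph (V ⊕ W)) (b : V ⊕ W → ℤ)
    (hH : ∀ v w, ¬H.Adj (Sum.inl v) (Sum.inr w)) :
    wDet H b = wDet (H.comap Sum.inl) (b ∘ Sum.inl) * wDet (H.comap Sum.inr) (b ∘ Sum.inr) := by
  rw [wDet_eq_det, wDet_eq_det, wDet_eq_det, wMatrix_sum_eq_fromBlocks H b hH,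
    Matrix.det_fromBlocks_zero₂₁]

theorem wDet_of_unique [Unique V] (G : SimpleGraph V) (a : V → ℤ) :
    wDet G a = -a default := by
  rw [wDet, Matrix.det_unique]
  simp [wMatrix]

end

section Blowup

variable {V : Type*} [Fintype V] [DecidableEq V]

theorem wDetDel_blowupVertexGraph_inr (G : SimpleGraph V) (a : V → ℤ) (P : V) :
    wDetDel (blowupVertexGraph G P) (blowupVertexWeights a P) {Sum.inr ()} =
      wDet G (Function.update a P (a P - 1)) := by
  let e : V ≃ {x : V ⊕ Unit // x ∉ ({Sum.inr ()} : Set (V ⊕ Unit))} :=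
    { toFun := fun v => ⟨Sum.inl v, Sum.inl_ne_inr⟩
      invFun := fun x => x.1.elim id fun _ => P
      left_inv := fun _ => rfl
      right_inv := by
        rintro ⟨v | ⟨⟩, hx⟩
        · rfl
        · exact absurd rfl hx }
  unfold wDetDel
  convert! (wDet_comap_equiv _ _ e).symm

theorem wDet_blowupVertexGraph_deleteEdges (G : SimpleGraph V) (a : V → ℤ) (P : V) :
    wDet ((blowupVertexGraph G P).deleteEdges {s(Sum.inl P, Sum.inr ())})
        (blowupVertexWeights a P) =
      wDet G (Function.update a P (a P - 1)) := by
  have hinl :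
      ((blowupVertexGraph G P).deleteEdges {s(Sum.inl P, Sum.inr ())}).comap Sum.inl = G := by
    ext u v
    simp [blowupVertexGraph]
  rw [wDet_sum_of_not_adj, hinl, wDet_of_unique (_ : SimpleGraph Unit)]
  · show _ * -(-1) = _
    rw [neg_neg, mul_one]
    rfl
  · rintro v ⟨⟩
    simp [blowupVertexGraph]

end Blowup

theorem forest_det_blowup_vertex_labels_general {V : Type*} [Fintype V] [DecidableEq V]
    (G : SimpleGraph V) (a : V → ℤ) (P : V) :
    wDetDel (blowupVertexGraph G P) (blowupVertexWeights a P) {Sum.inr ()} =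
        wDetDel G a {P} + wDet G a ∧
      wDet ((blowupVertexGraph G P).deleteEdges {s(Sum.inl P, Sum.inr ())})
          (blowupVertexWeights a P) =
        wDetDel G a {P} + wDet G a := by
  have hR : wDet G (Function.update a P (a P - 1)) = wDetDel G a {P} + wDet G a := by
    rw [wDet_update_sub, one_mul, add_comm]
  exact ⟨(wDetDel_blowupVertexGraph_inr G a P).trans hR,
    (wDet_blowupVertexGraph_deleteEdges G a P).trans hR⟩

/-- Lemma 5.7, Case 1: after blowing up a vertex `P` of a weighted forest `Γ`
(with `d(Γ') = d(Γ) = d`), the new vertex `R` satisfies `d_R = d_P + d` and the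
new edge satisfies `d_{PR} = d_P + d`. -/
theorem forest_det_blowup_vertex_labels {V : Type*} [Fintype V] [DecidableEq V]
    (G : SimpleGraph V) (hG : G.IsAcyclic) (a : V → ℤ) (P : V)
    (hd : wDet (blowupVertexGraph G P) (blowupVertexWeights a P) = wDet G a) :
    wDetDel (blowupVertexGraph G P) (blowupVertexWeights a P) {Sum.inr ()} =
        wDetDel G a {P} + wDet G a ∧
      wDet ((blowupVertexGraph G P).deleteEdges {s(Sum.inl P, Sum.inr ())})
          (blowupVertexWeights a P) =
        wDetDel G a {P} + wDet G a :=
  forest_det_blowup_vertex_labels_general G a P
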